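/- Let R be a commutative ring, J ⊆ R an ideal with R J-adically Hausdorff complete, and T a block matrix over R of size (p+q)×(p+q) written as T = [[T₀₀, T₀₁],[T₁₀, T₁₁]], where all entries of the off-diagonal blocks T₀₁, T₁₀ lie in J. Then T is invertible in M_{p+q}(R) if and only if both diagonal blocks T₀₀ ∈ M_p(R) and T₁₁ ∈ M_q(R) are invertible. -/

import Mathlib

/-!
Since `R` is `J`-adically complete, `J` lies in the Jacobson radical, so reduction modulo `J` is a
local homomorphism; via the determinant, so is its entrywise extension to square matrices. Modulo
`J` the matrix `T` becomes block diagonal, and a block-diagonal matrix is invertible iff its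
diagonal blocks are.
-/

open Matrix

theorem Matrix.isUnit_map_iff_of_isLocalHom {R S n : Type*} [CommRing R] [CommRing S] [Fintype n]
    [DecidableEq n] (f : R →+* S) [IsLocalHom f] (M : Matrix n n R) :
    IsUnit (M.map f) ↔ IsUnit M := by
  rw [isUnit_iff_isUnit_det, isUnit_iff_isUnit_det, ← RingHom.mapMatrix_apply, ← RingHom.map_det,
    isUnit_map_iff]

theorem Matrix.fromBlocks_map_quotient_mk_of_mem {R l m n o : Type*} [CommRing R] (J : Ideal R)
    (A : Matrix l m R) (B : Matrix l n R) (C : Matrix o m R) (D : Matrix o n R)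
    (hB : ∀ i j, B i j ∈ J) (hC : ∀ i j, C i j ∈ J) :
    (fromBlocks A B C D).map (Ideal.Quotient.mk J) =
      fromBlocks (A.map (Ideal.Quotient.mk J)) 0 0 (D.map (Ideal.Quotient.mk J)) := by
  rw [fromBlocks_map]
  congr 1 <;> ext i j
  exacts [Ideal.Quotient.eq_zero_iff_mem.mpr (hB i j), Ideal.Quotient.eq_zero_iff_mem.mpr (hC i j)]

/-- Over a `J`-adically Hausdorff complete commutative ring, a block matrix
whose off-diagonal blocks have entries in `J` is invertible iff both diagonal
blocks are invertible. -/
theorem blockMatrix_isUnit_iff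
    {R : Type*} [CommRing R] (J : Ideal R) [IsAdicComplete J R]
    (p q : ℕ)
    (T₀₀ : Matrix (Fin p) (Fin p) R) (T₀₁ : Matrix (Fin p) (Fin q) R)
    (T₁₀ : Matrix (Fin q) (Fin p) R) (T₁₁ : Matrix (Fin q) (Fin q) R)
    (h01 : ∀ i j, T₀₁ i j ∈ J) (h10 : ∀ i j, T₁₀ i j ∈ J) :
    IsUnit (Matrix.fromBlocks T₀₀ T₀₁ T₁₀ T₁₁) ↔ IsUnit T₀₀ ∧ IsUnit T₁₁ := by
  have := isLocalHom_of_le_jacobson_bot J (IsAdicComplete.le_jacobson_bot J)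
  simp only [← isUnit_map_iff_of_isLocalHom (Ideal.Quotient.mk J),
    fromBlocks_map_quotient_mk_of_mem J _ _ _ _ h01 h10, isUnit_fromBlocks_zero₂₁]
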